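/- Let d ≥ 1, δ > 0, let μ be a finite nonnegative Borel measure on [0,δ], let x⁰ : [−δ,1] → ℝ^d be continuous, let Θ be a compact metric space and let f : ℝ^d × ℝ^d × Θ → ℝ be continuous. Let (Ω, 𝓕, P) be a probability space and, for each n ≥ 1, let Z^n : Ω → C([−δ,1]; ℝ^d) be measurable such that sup_{s∈[−δ,1]} ‖Z^n(s) − x⁰(s)‖ → 0 in probability as n → ∞. Then sup_{θ∈Θ} | (1/n) Σ_{k=1}^{n} f( Z^n((k−1)/n), ∫₀^δ Z^n((k−1)/n − g_n(u)) μ(du), θ ) − ∫₀^1 f( x⁰(s), ∫₀^δ x⁰(s−u) μ(du), θ ) ds | → 0 in probability as n → ∞. -/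

import Mathlib

/-!
On the event `sup_{[-δ,1]} ‖Z^n - x⁰‖ ≤ η` everything is deterministic. For `s` in the cell
`((k-1)/n, k/n]` the point `(Z^n(t_{k-1}), H_n(Z^n(t_{k-1} - ·)), θ)` lies within
`O(η + ω(2/n))` of `(x⁰(s), H(x⁰(s - ·)), θ)`, where `ω` is the modulus of continuity of `x⁰` on
`[-δ,1]` and `0 ≤ u - g_n(u) ≤ 1/n`. Since `f` is uniformly continuous near the compact set of
limit points `(x⁰(s), H(x⁰(s - ·)), θ)`, each summand is `ρ`-close to the integrand on its cell,
uniformly in `θ`, so the Riemann sum is `ρ`-close to the integral. The bad event is therefore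
contained in `{sup ‖Z^n - x⁰‖ ≥ η}` for large `n`.
-/

open MeasureTheory Set Filter

section Compactness

variable {α β : Type*} [PseudoMetricSpace α] [PseudoMetricSpace β]

theorem IsCompact.exists_forall_dist_lt {K : Set α} (hK : IsCompact K) {f : α → β}
    (hf : ∀ a ∈ K, ContinuousAt f a) {ε : ℝ} (hε : 0 < ε) :
    ∃ r > 0, ∀ a ∈ K, ∀ b, dist b a < r → dist (f b) (f a) < ε := by
  obtain ⟨r, hr, hball⟩ := Metric.mem_uniformity_dist.1
    (hK.uniformContinuousAt_of_continuousAt f hf (Metric.dist_mem_uniformity hε))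
  exact ⟨r, hr, fun a ha b hab => by
    rw [dist_comm]; exact hball (a := a) (b := b) (by rwa [dist_comm]) ha⟩

end Compactness

section Integrals

variable {α E : Type*} [MeasurableSpace α] [NormedAddCommGroup E] [NormedSpace ℝ E]

theorem norm_setIntegral_sub_setIntegral_le {μ : Measure α} [IsFiniteMeasure μ] {s : Set α}
    (hs : MeasurableSet s) {F G : α → E} {c : ℝ} (hF : AEStronglyMeasurable F (μ.restrict s))
    (hG : IntegrableOn G s μ) (h : ∀ x ∈ s, ‖F x - G x‖ ≤ c) :
    ‖∫ x in s, F x ∂μ - ∫ x in s, G x ∂μ‖ ≤ c * μ.real s := by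
  have hFG : IntegrableOn (fun x => F x - G x) s μ :=
    .of_bound (measure_lt_top μ s) (hF.sub hG.aestronglyMeasurable) c
      (ae_restrict_of_forall_mem hs h)
  have hF' : IntegrableOn F s μ :=
    (hFG.add hG).congr_fun (fun x _ => sub_add_cancel (F x) (G x)) hs
  rw [← integral_sub hF' hG]
  exact norm_setIntegral_le_of_norm_le_const (measure_lt_top μ s) h

theorem abs_riemannSum_sub_integral_le {n : ℕ} (hn : 0 < n) {U : ℕ → ℝ} {G : ℝ → ℝ} {ρ : ℝ}
    (hG : IntervalIntegrable G volume 0 1)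
    (h : ∀ k ∈ Finset.Icc 1 n, ∀ s ∈ Ioc (((k : ℝ) - 1) / n) (k / n), |U k - G s| ≤ ρ) :
    |1 / n * ∑ k ∈ Finset.Icc 1 n, U k - ∫ s in (0 : ℝ)..1, G s| ≤ ρ := by
  have hn' : (0 : ℝ) < n := Nat.cast_pos.2 hn
  set a : ℕ → ℝ := fun k => ((k : ℝ) - 1) / n with ha
  have hstep : ∀ k, a (k + 1) - a k = 1 / n := fun k => by simp only [ha]; push_cast; ring
  have hle : ∀ k, a k ≤ a (k + 1) := fun k => by linarith [hstep k, one_div_pos.2 hn']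
  have hcell : ∀ k ∈ Finset.Ico 1 (n + 1), uIcc (a k) (a (k + 1)) ⊆ uIcc 0 1 := by
    intro k hk
    obtain ⟨hk1, hkn⟩ := Finset.mem_Ico.1 hk
    have hk1' : (1 : ℝ) ≤ k := by exact_mod_cast hk1
    have hkn' : (k : ℝ) ≤ n := by exact_mod_cast Nat.lt_succ_iff.1 hkn
    rw [uIcc_of_le (hle k), uIcc_of_le zero_le_one]
    refine Icc_subset_Icc (div_nonneg (by linarith) hn'.le) ?_
    simp only [ha]; push_cast
    rw [div_le_one hn']; linarith
  have hsplit :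
      ∑ k ∈ Finset.Ico 1 (n + 1), ∫ s in a k..a (k + 1), G s = ∫ s in (0 : ℝ)..1, G s := by
    rw [intervalIntegral.sum_integral_adjacent_intervals_Ico (m := 1) (n := n + 1) (by omega)
      fun k hk => hG.mono_set (hcell k (by simpa using hk))]
    simp [ha, hn'.ne']
  have hterm : ∀ k ∈ Finset.Ico 1 (n + 1),
      |1 / n * U k - ∫ s in a k..a (k + 1), G s| ≤ ρ / n := by
    intro k hk
    have hGk : IntervalIntegrable G volume (a k) (a (k + 1)) := hG.mono_set (hcell k hk)
    have hbound : ∀ s ∈ uIoc (a k) (a (k + 1)), ‖U k - G s‖ ≤ ρ := fun s hs => by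
      rw [uIoc_of_le (hle k)] at hs
      refine h k (Finset.Ico_add_one_right_eq_Icc 1 n ▸ hk) s ⟨hs.1, ?_⟩
      simpa [ha] using hs.2
    calc |1 / n * U k - ∫ s in a k..a (k + 1), G s|
        = ‖∫ s in a k..a (k + 1), (U k - G s)‖ := by
          rw [intervalIntegral.integral_sub intervalIntegrable_const hGk,
            intervalIntegral.integral_const, hstep, smul_eq_mul, Real.norm_eq_abs]
      _ ≤ ρ * |a (k + 1) - a k| := intervalIntegral.norm_integral_le_of_norm_le_const hbound
      _ = ρ / n := by rw [hstep, abs_of_pos (one_div_pos.2 hn'), mul_one_div]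
  calc |1 / n * ∑ k ∈ Finset.Icc 1 n, U k - ∫ s in (0 : ℝ)..1, G s|
      = |∑ k ∈ Finset.Ico 1 (n + 1), (1 / n * U k - ∫ s in a k..a (k + 1), G s)| := by
        rw [← Finset.Ico_add_one_right_eq_Icc, Finset.mul_sum, ← hsplit, Finset.sum_sub_distrib]
    _ ≤ ∑ k ∈ Finset.Ico 1 (n + 1), |1 / n * U k - ∫ s in a k..a (k + 1), G s| :=
        Finset.abs_sum_le_sum_abs _ _
    _ ≤ ∑ _k ∈ Finset.Ico 1 (n + 1), ρ / n := Finset.sum_le_sum hterm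
    _ = ρ := by
        rw [Finset.sum_const, Nat.card_Ico, Nat.add_sub_cancel, nsmul_eq_mul]
        field_simp

end Integrals

noncomputable def gridMap (n : ℕ) (δ u : ℝ) : ℝ :=
  min ((⌊(n : ℝ) * u⌋₊ : ℝ) / n) ((⌊(n : ℝ) * δ⌋₊ : ℝ) / n)

theorem gridMap_nonneg (n : ℕ) (δ u : ℝ) : 0 ≤ gridMap n δ u :=
  le_min (by positivity) (by positivity)

theorem gridMap_le {n : ℕ} {δ u : ℝ} (hu : 0 ≤ u) : gridMap n δ u ≤ u :=
  min_le_of_left_le <| div_le_of_le_mul₀ n.cast_nonneg hu <| by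
    rw [mul_comm]; exact Nat.floor_le (by positivity)

theorem sub_gridMap_le {n : ℕ} (hn : 0 < n) {δ u : ℝ} (hu : u ≤ δ) : u - gridMap n δ u ≤ 1 / n := by
  have hn' : (0 : ℝ) < n := Nat.cast_pos.2 hn
  have hfloor : ∀ v : ℝ, v - (⌊(n : ℝ) * v⌋₊ : ℝ) / n ≤ 1 / n := fun v => by
    rw [sub_le_iff_le_add, ← add_div, le_div_iff₀ hn']
    linarith [Nat.lt_floor_add_one ((n : ℝ) * v)]
  rcases min_choice ((⌊(n : ℝ) * u⌋₊ : ℝ) / n) ((⌊(n : ℝ) * δ⌋₊ : ℝ) / n) with h | h <;>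
    rw [gridMap, h]
  · exact hfloor u
  · linarith [hfloor δ]

theorem gridMap_eq_natCast_div (n : ℕ) (δ u : ℝ) :
    gridMap n δ u = ((min ⌊(n : ℝ) * u⌋₊ ⌊(n : ℝ) * δ⌋₊ : ℕ) : ℝ) / n := by
  rw [gridMap, Nat.cast_min, min_div_div_right n.cast_nonneg]

theorem sub_mem_Icc_neg {δ s u : ℝ} (hs : s ∈ Icc (0 : ℝ) 1) (hu : u ∈ Icc 0 δ) :
    s - u ∈ Icc (-δ) 1 :=
  ⟨by linarith [hs.1, hu.2], by linarith [hs.2, hu.1]⟩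

section Delay

variable {E : Type*} [NormedAddCommGroup E]

-- `gridMap n δ` takes values in `ℕ / n`, so no measurability of `z` is needed.
theorem stronglyMeasurable_comp_sub_gridMap (z : ℝ → E) (n : ℕ) (δ t : ℝ) :
    StronglyMeasurable fun u => z (t - gridMap n δ u) := by
  simp_rw [gridMap_eq_natCast_div]
  exact (StronglyMeasurable.of_discrete (f := fun k : ℕ => z (t - k / n))).comp_measurable
    ((Nat.measurable_floor.comp (measurable_const_mul _)).min measurable_const)

variable {μ : Measure ℝ} [IsFiniteMeasure μ] {δ : ℝ} {x : ℝ → E}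

theorem integrableOn_comp_sub (hx : ContinuousOn x (Icc (-δ) 1)) {s : ℝ} (hs : s ∈ Icc (0 : ℝ) 1) :
    IntegrableOn (fun u => x (s - u)) (Icc 0 δ) μ :=
  (hx.comp (continuousOn_const.sub continuousOn_id) fun _ hu =>
    sub_mem_Icc_neg hs hu).integrableOn_Icc

variable [NormedSpace ℝ E]

/-- `delay μ δ x s` is the paper's `H(x(s - ·))` and `gridDelay μ δ n x t` is `H_n(x(t - ·))`. -/
noncomputable def delay (μ : Measure ℝ) (δ : ℝ) (x : ℝ → E) (s : ℝ) : E :=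
  ∫ u in Icc 0 δ, x (s - u) ∂μ

noncomputable def gridDelay (μ : Measure ℝ) (δ : ℝ) (n : ℕ) (x : ℝ → E) (t : ℝ) : E :=
  ∫ u in Icc 0 δ, x (t - gridMap n δ u) ∂μ

theorem continuousOn_delay (hx : ContinuousOn x (Icc (-δ) 1)) :
    ContinuousOn (delay μ δ x) (Icc 0 1) := by
  obtain ⟨M, hM⟩ := isCompact_Icc.exists_bound_of_continuousOn hx
  refine continuousOn_of_dominated (bound := fun _ => M)
    (fun s hs => (integrableOn_comp_sub hx hs).aestronglyMeasurable)
    (fun s hs => ae_restrict_of_forall_mem measurableSet_Icc fun u hu =>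
      hM _ (sub_mem_Icc_neg hs hu))
    (integrable_const M)
    (ae_restrict_of_forall_mem measurableSet_Icc fun u hu =>
      hx.comp (continuousOn_id.sub continuousOn_const) fun _ hs => sub_mem_Icc_neg hs hu)

end Delay

theorem mem_Icc_of_mem_riemannCell {n k : ℕ} (hn : 0 < n) (hk : k ∈ Finset.Icc 1 n) {s : ℝ}
    (hs : s ∈ Ioc (((k : ℝ) - 1) / n) (k / n)) :
    ((k : ℝ) - 1) / n ∈ Icc (0 : ℝ) 1 ∧ s ∈ Icc (0 : ℝ) 1 ∧ dist (((k : ℝ) - 1) / n) s ≤ 1 / n := by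
  have hn' : (0 : ℝ) < n := Nat.cast_pos.2 hn
  obtain ⟨hk1, hkn⟩ := Finset.mem_Icc.1 hk
  have hk1' : (1 : ℝ) ≤ k := by exact_mod_cast hk1
  have hkn' : (k : ℝ) / n ≤ 1 := (div_le_one hn').2 (by exact_mod_cast hkn)
  have hstep : (k : ℝ) / n - ((k : ℝ) - 1) / n = 1 / n := by ring
  have ht0 : 0 ≤ ((k : ℝ) - 1) / n := div_nonneg (by linarith) hn'.le
  refine ⟨⟨ht0, by linarith [hs.1, hs.2]⟩, ⟨by linarith [hs.1], hs.2.trans hkn'⟩, ?_⟩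
  rw [Real.dist_eq, abs_sub_comm, abs_of_pos (by linarith [hs.1])]
  linarith [hs.2]

section Deterministic

variable {E : Type*} [NormedAddCommGroup E] [NormedSpace ℝ E]
  {μ : Measure ℝ} [IsFiniteMeasure μ] {δ : ℝ} {x : ℝ → E}

theorem exists_eventually_dist_gridDelay_lt (hδ : 0 ≤ δ) (hx : ContinuousOn x (Icc (-δ) 1))
    {r : ℝ} (hr : 0 < r) :
    ∃ η > 0, ∀ᶠ n : ℕ in atTop, ∀ z : ℝ → E, (∀ s ∈ Icc (-δ) 1, ‖z s - x s‖ ≤ η) →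
      ∀ k ∈ Finset.Icc 1 n, ∀ s ∈ Ioc (((k : ℝ) - 1) / n) (k / n),
        dist (z (((k : ℝ) - 1) / n)) (x s) < r ∧
        dist (gridDelay μ δ n z (((k : ℝ) - 1) / n)) (delay μ δ x s) < r := by
  set C := μ.real (Icc 0 δ)
  have hC : 0 ≤ C := measureReal_nonneg
  set ε := r / (4 * (C + 1))
  have hε : 0 < ε := by positivity
  have hεr : 2 * ε * C < r ∧ 2 * ε < r := by
    have h : 2 * ε * (C + 1) = r / 2 := by simp only [ε]; field_simp; ring
    constructor <;> nlinarith
  obtain ⟨rx, hrx, hux⟩ := Metric.uniformContinuousOn_iff_le.1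
    (isCompact_Icc.uniformContinuousOn_of_continuous hx) ε hε
  refine ⟨ε, hε, ?_⟩
  filter_upwards [eventually_gt_atTop 0,
    (tendsto_const_div_atTop_nhds_zero_nat (2 : ℝ)).eventually (gt_mem_nhds hrx)]
    with n hn h2n z hz k hk s hs
  obtain ⟨ht, hs01, hts⟩ := mem_Icc_of_mem_riemannCell hn hk hs
  set t := ((k : ℝ) - 1) / n
  have hclose : ∀ a ∈ Icc (-δ) 1, ∀ b ∈ Icc (-δ) 1, dist a b ≤ 2 / n →
      dist (z a) (x b) ≤ 2 * ε := fun a ha b hb hab =>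
    calc dist (z a) (x b) ≤ dist (z a) (x a) + dist (x a) (x b) := dist_triangle _ _ _
      _ ≤ ε + ε :=
        add_le_add ((dist_eq_norm _ _).trans_le (hz a ha)) (hux a ha b hb (hab.trans h2n.le))
      _ = 2 * ε := by ring
  have h1n : 1 / (n : ℝ) ≤ 2 / n := by gcongr; norm_num
  have hIcc : Icc (0 : ℝ) 1 ⊆ Icc (-δ) 1 := Icc_subset_Icc (by linarith) le_rfl
  refine ⟨(hclose t (hIcc ht) s (hIcc hs01) (hts.trans h1n)).trans_lt hεr.2, ?_⟩
  have hpt : ∀ u ∈ Icc 0 δ, ‖z (t - gridMap n δ u) - x (s - u)‖ ≤ 2 * ε := fun u hu => by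
    have hg : gridMap n δ u ∈ Icc 0 δ := ⟨gridMap_nonneg n δ u, (gridMap_le hu.1).trans hu.2⟩
    have hdist : dist (t - gridMap n δ u) (s - u) ≤ 2 / n :=
      calc dist (t - gridMap n δ u) (s - u) = |(t - s) + (u - gridMap n δ u)| := by
            rw [Real.dist_eq]; ring_nf
        _ ≤ |t - s| + |u - gridMap n δ u| := abs_add_le _ _
        _ ≤ 1 / n + 1 / n := add_le_add (Real.dist_eq t s ▸ hts)
            ((abs_of_nonneg (sub_nonneg.2 (gridMap_le hu.1))).trans_le (sub_gridMap_le hn hu.2))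
        _ = 2 / n := by ring
    rw [← dist_eq_norm]
    exact hclose _ (sub_mem_Icc_neg ht hg) _ (sub_mem_Icc_neg hs01 hu) hdist
  rw [dist_eq_norm]
  exact (norm_setIntegral_sub_setIntegral_le measurableSet_Icc
    (stronglyMeasurable_comp_sub_gridMap z n δ t).aestronglyMeasurable
    (integrableOn_comp_sub hx hs01) hpt).trans_lt hεr.1

theorem exists_eventually_abs_riemannSum_sub_integral_le (hδ : 0 ≤ δ)
    (hx : ContinuousOn x (Icc (-δ) 1)) {Θ : Type*} [PseudoMetricSpace Θ] [CompactSpace Θ]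
    {f : E → E → Θ → ℝ} (hf : Continuous fun q : E × E × Θ => f q.1 q.2.1 q.2.2)
    {ρ : ℝ} (hρ : 0 < ρ) :
    ∃ η > 0, ∀ᶠ n : ℕ in atTop, ∀ z : ℝ → E, (∀ s ∈ Icc (-δ) 1, ‖z s - x s‖ ≤ η) → ∀ θ : Θ,
      |1 / n * ∑ k ∈ Finset.Icc 1 n,
          f (z (((k : ℝ) - 1) / n)) (gridDelay μ δ n z (((k : ℝ) - 1) / n)) θ
        - ∫ s in (0 : ℝ)..1, f (x s) (delay μ δ x s) θ| ≤ ρ := by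
  set p : ℝ × Θ → E × E × Θ := fun q => (x q.1, delay μ δ x q.1, q.2)
  have hIcc : Icc (0 : ℝ) 1 ⊆ Icc (-δ) 1 := Icc_subset_Icc (by linarith) le_rfl
  have hp : ContinuousOn p (Icc 0 1 ×ˢ univ) :=
    ((hx.mono hIcc).comp continuousOn_fst fun _ hq => hq.1).prodMk
      (((continuousOn_delay hx).comp continuousOn_fst fun _ hq => hq.1).prodMk continuousOn_snd)
  obtain ⟨r, hr, hK⟩ := ((isCompact_Icc.prod isCompact_univ).image_of_continuousOn hp)
    |>.exists_forall_dist_lt (fun _ _ => hf.continuousAt) hρ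
  obtain ⟨η, hη, hclose⟩ := exists_eventually_dist_gridDelay_lt (μ := μ) hδ hx hr
  refine ⟨η, hη, ?_⟩
  filter_upwards [hclose, eventually_gt_atTop 0] with n hn hn0 z hz θ
  have hG : ContinuousOn (fun s => f (x s) (delay μ δ x s) θ) (Icc 0 1) :=
    hf.comp_continuousOn (hp.comp (continuousOn_id.prodMk continuousOn_const)
      fun s hs => ⟨hs, mem_univ θ⟩)
  refine abs_riemannSum_sub_integral_le hn0 (hG.intervalIntegrable_of_Icc zero_le_one)
    fun k hk s hs => ?_
  obtain ⟨h1, h2⟩ := hn z hz k hk s hs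
  have hlim : p (s, θ) ∈ p '' (Icc 0 1 ×ˢ univ) :=
    mem_image_of_mem p ⟨(mem_Icc_of_mem_riemannCell hn0 hk hs).2.1, mem_univ θ⟩
  have := hK _ hlim (z _, gridDelay μ δ n z _, θ) <| by
    rw [Prod.dist_eq, Prod.dist_eq, dist_self]; exact max_lt h1 (max_lt h2 hr)
  rw [Real.dist_eq] at this
  exact this.le

end Deterministic

theorem riemann_sum_uniform_convergence_in_probability_general
    (d : ℕ) (δ : ℝ) (hδ : 0 < δ)
    (μ : Measure ℝ) [IsFiniteMeasure μ]
    (x0 : ℝ → EuclideanSpace ℝ (Fin d)) (hx0 : ContinuousOn x0 (Icc (-δ) 1))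
    (Θ : Type*) [MetricSpace Θ] [CompactSpace Θ]
    (f : EuclideanSpace ℝ (Fin d) → EuclideanSpace ℝ (Fin d) → Θ → ℝ)
    (hf : Continuous fun q : EuclideanSpace ℝ (Fin d) × EuclideanSpace ℝ (Fin d) × Θ =>
      f q.1 q.2.1 q.2.2)
    (Ω : Type*) [MeasurableSpace Ω] (P : Measure Ω)
    (Z : ℕ → Ω → ℝ → EuclideanSpace ℝ (Fin d))
    (hZc : ∀ n ω, ContinuousOn (Z n ω) (Icc (-δ) 1))
    (hconv : ∀ ρ : ℝ, 0 < ρ →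
      Tendsto (fun n : ℕ =>
          P {ω | ρ ≤ sSup ((fun s => ‖Z n ω s - x0 s‖) '' Icc (-δ) (1:ℝ))})
        atTop (nhds 0)) :
    ∀ ρ : ℝ, 0 < ρ →
      Tendsto (fun n : ℕ =>
          P {ω | ρ ≤ ⨆ θ : Θ,
            |(1 / (n:ℝ)) * ∑ k ∈ Finset.Icc 1 n,
                f (Z n ω (((k:ℝ) - 1) / n))
                  (∫ u in Icc (0:ℝ) δ,
                    Z n ω (((k:ℝ) - 1) / n
                      - min ((⌊(n:ℝ) * u⌋₊ : ℝ) / n) ((⌊(n:ℝ) * δ⌋₊ : ℝ) / n)) ∂μ) θ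
              - ∫ s in (0:ℝ)..1, f (x0 s) (∫ u in Icc (0:ℝ) δ, x0 (s - u) ∂μ) θ|})
        atTop (nhds 0) := by
  intro ρ hρ
  obtain ⟨η, hη, hdet⟩ := exists_eventually_abs_riemannSum_sub_integral_le (μ := μ) hδ.le hx0 hf
    (half_pos hρ)
  refine tendsto_of_tendsto_of_tendsto_of_le_of_le' tendsto_const_nhds (hconv η hη)
    (.of_forall fun _ => zero_le) ?_
  filter_upwards [hdet] with n hn
  refine measure_mono fun ω hω => ?_
  by_contra hsSup
  have hbdd : BddAbove ((fun s => ‖Z n ω s - x0 s‖) '' Icc (-δ) 1) :=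
    (isCompact_Icc.image_of_continuousOn ((hZc n ω).sub hx0).norm).bddAbove
  have hclose : ∀ s ∈ Icc (-δ) 1, ‖Z n ω s - x0 s‖ ≤ η := fun s hs =>
    (le_csSup hbdd (mem_image_of_mem _ hs)).trans (not_le.1 hsSup).le
  exact not_le.2 ((Real.iSup_le (hn (Z n ω) hclose) (half_pos hρ).le).trans_lt
    (half_lt_self hρ)) hω

/-- The paper's Lemma 6(i): if the sample paths `Z^n` converge to the deterministic limit
path `x⁰` uniformly on `[-δ,1]` in probability, then the discretized Riemann sums of
`f(Z^n, H_n(Z^n), θ)` converge, uniformly in `θ` over the compact parameter space and in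
probability, to `∫₀¹ f(x⁰(s), H(x⁰(s-·)), θ) ds`. -/
theorem riemann_sum_uniform_convergence_in_probability
    (d : ℕ) (hd : 1 ≤ d) (δ : ℝ) (hδ : 0 < δ)
    (μ : Measure ℝ) [IsFiniteMeasure μ]
    (x0 : ℝ → EuclideanSpace ℝ (Fin d)) (hx0 : ContinuousOn x0 (Icc (-δ) 1))
    (Θ : Type*) [MetricSpace Θ] [CompactSpace Θ]
    (f : EuclideanSpace ℝ (Fin d) → EuclideanSpace ℝ (Fin d) → Θ → ℝ)
    (hf : Continuous fun q : EuclideanSpace ℝ (Fin d) × EuclideanSpace ℝ (Fin d) × Θ =>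
      f q.1 q.2.1 q.2.2)
    (Ω : Type*) [MeasurableSpace Ω] (P : Measure Ω) [IsProbabilityMeasure P]
    (Z : ℕ → Ω → ℝ → EuclideanSpace ℝ (Fin d))
    (hZm : ∀ n, Measurable (fun q : Ω × ℝ => Z n q.1 q.2))
    (hZc : ∀ n ω, ContinuousOn (Z n ω) (Icc (-δ) 1))
    (hconv : ∀ ρ : ℝ, 0 < ρ →
      Tendsto (fun n : ℕ =>
          P {ω | ρ ≤ sSup ((fun s => ‖Z n ω s - x0 s‖) '' Icc (-δ) (1:ℝ))})
        atTop (nhds 0)) :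
    ∀ ρ : ℝ, 0 < ρ →
      Tendsto (fun n : ℕ =>
          P {ω | ρ ≤ ⨆ θ : Θ,
            |(1 / (n:ℝ)) * ∑ k ∈ Finset.Icc 1 n,
                f (Z n ω (((k:ℝ) - 1) / n))
                  (∫ u in Icc (0:ℝ) δ,
                    Z n ω (((k:ℝ) - 1) / n
                      - min ((⌊(n:ℝ) * u⌋₊ : ℝ) / n) ((⌊(n:ℝ) * δ⌋₊ : ℝ) / n)) ∂μ) θ
              - ∫ s in (0:ℝ)..1, f (x0 s) (∫ u in Icc (0:ℝ) δ, x0 (s - u) ∂μ) θ|})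
        atTop (nhds 0) :=
  riemann_sum_uniform_convergence_in_probability_general d δ hδ μ x0 hx0 Θ f hf Ω P Z hZc hconv
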